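/- For every prime p and integers l, d ≥ 1, m ≥ 1 and 0 ≤ j ≤ m − 1 there exists a constant C = C(l, d, p, j) with the following property. Let G be a countable discrete abelian group, let X be an ergodic G-system, and let P : X → ℤ/p^mℤ be a measurable additive phase polynomial of degree < d. Let b_j : ℤ/p^mℤ → {0, 1, …, p−1} send an element to the j-th base-p digit of its unique representative in {0, 1, …, p^m − 1}, and embed {0, 1, …, p−1} into ℤ/p^lℤ in the obvious manner. Then the map x ↦ b_j(P(x)), viewed as a map X → ℤ/p^lℤ, is an additive phase polynomial of degree < C. -/

import Mathlib

/-!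
The `j`-th digit only depends on the residue modulo `p ^ (j + 1)`, and reduction modulo
`p ^ (j + 1)` is additive, so the digit map is `χ ∘ Q` with `Q : X → ℤ/p^(j+1)` a phase
polynomial of degree `< d` and `χ : ℤ/p^(j+1) → ℤ/p^l` arbitrary. Every such `χ` is a
polynomial map of degree `< p^(j+1) l`: the shift `S` by one satisfies `S ^ p^(j+1) = 1`, hence
`(S - 1) ^ p^(j+1)` is divisible by `p`, and `(S - 1) ^ (p^(j+1) l)` annihilates
`ℤ/p^l`-valued maps. Finally, a polynomial map composed with a phase polynomial is a phase
polynomial, by induction on both degrees via `Δ_g (χ ∘ Q) = ∑ₐ 1[Δ_g Q = a] · (Δ_a χ) ∘ Q`.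
-/

open MeasureTheory
open scoped symmDiff

/-- `P : X → A` is an additive phase polynomial of degree `< k` with respect to the action
`T` of `G` on `(X, μ)`: all `k`-fold additive derivatives `Δ⁺_{h₁} ⋯ Δ⁺_{h_k} P` vanish
almost everywhere, where `Δ⁺_g P = P ∘ T_g - P`. -/
def AddPhasePoly {G X A : Type*} [MeasurableSpace X] [AddCommGroup A]
    (T : G → X → X) (μ : Measure X) : ℕ → (X → A) → Prop
  | 0, P => ∀ᵐ x ∂μ, P x = 0
  | (k + 1), P => ∀ g : G, AddPhasePoly T μ k (fun x => P (T g x) - P x)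

/-- The action `T` of `G` on `(X, μ)` is ergodic. -/
def IsErgodicAction {G X : Type*} [MeasurableSpace X] (T : G → X → X)
    (μ : Measure X) : Prop :=
  ∀ A : Set X, MeasurableSet A → (∀ g : G, μ ((T g ⁻¹' A) ∆ A) = 0) → μ A = 0 ∨ μ A = 1

open fwdDiff fwdDiff_aux

/-- `f` is a polynomial map of degree `< k`: all `k`-fold forward differences vanish. -/
def AddPoly {M G : Type*} [AddCommMonoid M] [AddCommGroup G] : ℕ → (M → G) → Prop
  | 0, f => f = 0
  | k + 1, f => ∀ a, AddPoly k (Δ_[a] f)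

section

variable {M G : Type*} [AddCommMonoid M] [AddCommGroup G]

theorem fwdDiff_nsmul (h : M) (n : ℕ) (f : M → G) :
    Δ_[n • h] f = ((∑ i ∈ Finset.range n, shiftₗ M G h ^ i) * fwdDiffₗ M G h) f := by
  have hD : fwdDiffₗ M G h = shiftₗ M G h - 1 := (add_sub_cancel_right _ _).symm
  ext y
  rw [hD, geom_sum_mul, LinearMap.sub_apply, Pi.sub_apply, shiftₗ_pow_apply]
  rfl

theorem addPoly_of_fwdDiffₗ_pow_apply_eq_zero {h : M} (hgen : ∀ a : M, ∃ n : ℕ, n • h = a)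
    {k : ℕ} {f : M → G} (hf : (fwdDiffₗ M G h ^ k) f = 0) : AddPoly k f := by
  induction k generalizing f with
  | zero => exact hf
  | succ k ih =>
    intro a
    obtain ⟨n, rfl⟩ := hgen a
    apply ih
    set D := fwdDiffₗ M G h
    have hcomm : Commute (D ^ k) (∑ i ∈ Finset.range n, shiftₗ M G h ^ i) :=
      (Commute.sum_right _ _ _ fun i _ =>
        (((Commute.refl D).add_right (Commute.one_right D)).pow_right i)).pow_left k
    rw [fwdDiff_nsmul, ← Module.End.mul_apply, ← mul_assoc, hcomm.eq, mul_assoc,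
      ← pow_succ, Module.End.mul_apply, hf, map_zero]

theorem exists_sub_one_pow_prime_pow_eq_mul {R : Type*} [Ring R] {p : ℕ} (hp : p.Prime) (n : ℕ)
    {S : R} (hS : S ^ p ^ n = 1) : ∃ c : R, (S - 1) ^ p ^ n = p * c := by
  -- `1 + (-1) ^ p ^ n` is `0` for odd `p` and `2 = p` for `p = 2`
  have hsign : ∃ c : R, 1 + (-1) ^ p ^ n = p * c := by
    rcases Nat.even_or_odd (p ^ n) with heven | hodd
    · have hp2 : p = 2 := hp.even_iff.mp (Nat.even_pow.mp heven).1
      exact ⟨1, by rw [heven.neg_one_pow, hp2]; norm_num⟩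
    · exact ⟨0, by rw [hodd.neg_one_pow]; simp⟩
  obtain ⟨c, hc⟩ := hsign
  rw [sub_eq_add_neg, ((Commute.one_right S).neg_right).add_pow_prime_pow_eq' hp, hS, hc,
    ← mul_add]
  exact ⟨_, rfl⟩

theorem fwdDiffₗ_pow_eq_zero {p : ℕ} (hp : p.Prime) {n l : ℕ} {h : M} (hh : p ^ n • h = 0)
    (hG : ∀ g : G, p ^ l • g = 0) : fwdDiffₗ M G h ^ (p ^ n * l) = 0 := by
  have hS : shiftₗ M G h ^ p ^ n = 1 := by
    ext f y
    rw [shiftₗ_pow_apply, hh, add_zero]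
    rfl
  obtain ⟨c, hc⟩ := exists_sub_one_pow_prime_pow_eq_mul hp n hS
  have hD : fwdDiffₗ M G h = shiftₗ M G h - 1 := (add_sub_cancel_right _ _).symm
  ext f y
  rw [pow_mul, hD, hc, (Nat.cast_commute p c).mul_pow, ← Nat.cast_pow, Module.End.mul_apply,
    Module.End.natCast_apply, Pi.smul_apply, hG]
  rfl

theorem addPoly_of_nsmul_eq_zero {p : ℕ} (hp : p.Prime) {n l : ℕ} {h : M}
    (hgen : ∀ a : M, ∃ k : ℕ, k • h = a) (hh : p ^ n • h = 0)
    (hG : ∀ g : G, p ^ l • g = 0) (f : M → G) : AddPoly (p ^ n * l) f :=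
  addPoly_of_fwdDiffₗ_pow_apply_eq_zero hgen (by rw [fwdDiffₗ_pow_eq_zero hp hh hG]; rfl)

end

theorem addPoly_zmod_prime_pow {p : ℕ} (hp : p.Prime) (n l : ℕ)
    (f : ZMod (p ^ n) → ZMod (p ^ l)) : AddPoly (p ^ n * l) f := by
  have : NeZero (p ^ n) := ⟨pow_ne_zero _ hp.ne_zero⟩
  refine addPoly_of_nsmul_eq_zero hp (h := 1) (fun a => ⟨a.val, ?_⟩) ?_ ?_ f
  · rw [nsmul_one, ZMod.natCast_zmod_val]
  · rw [nsmul_one, ZMod.natCast_self]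
  · intro g; rw [nsmul_eq_mul, ZMod.natCast_self, zero_mul]

def compDegree (s : ℕ) : ℕ → ℕ
  | 0 => 1
  | d + 1 => s * (compDegree s d + 1)

namespace AddPhasePoly

variable {ι X A : Type*} [MeasurableSpace X] [AddCommGroup A] {μ : Measure X} {T : ι → X → X}
  {k : ℕ} {P Q : X → A}

theorem zero_iff : AddPhasePoly T μ 0 P ↔ P =ᵐ[μ] 0 := Iff.rfl

theorem succ_iff : AddPhasePoly T μ (k + 1) P ↔ ∀ g, AddPhasePoly T μ k (P ∘ T g - P) := Iff.rfl

protected theorem zero : ∀ k, AddPhasePoly T μ k (0 : X → A)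
  | 0 => Filter.EventuallyEq.rfl
  | k + 1 => succ_iff.mpr fun _ => by simpa using AddPhasePoly.zero k

protected theorem add (hP : AddPhasePoly T μ k P) (hQ : AddPhasePoly T μ k Q) :
    AddPhasePoly T μ k (P + Q) := by
  induction k generalizing P Q with
  | zero =>
    rw [zero_iff] at *
    simpa using hP.add hQ
  | succ k ih =>
    rw [succ_iff]
    intro g
    rw [show (P + Q) ∘ T g - (P + Q) = (P ∘ T g - P) + (Q ∘ T g - Q) by ext; simp; abel]
    exact ih (hP g) (hQ g)

protected theorem map {B : Type*} [AddCommGroup B] (φ : A →+ B) (hP : AddPhasePoly T μ k P) :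
    AddPhasePoly T μ k (φ ∘ P) := by
  induction k generalizing P with
  | zero => exact hP.mono fun x hx => by simp [hx]
  | succ k ih =>
    rw [succ_iff]
    intro g
    rw [show (φ ∘ P) ∘ T g - φ ∘ P = φ ∘ (P ∘ T g - P) by ext; simp]
    exact ih (hP g)

section

variable (hT : ∀ g, Measure.QuasiMeasurePreserving (T g) μ μ)
include hT

theorem succ (hP : AddPhasePoly T μ k P) : AddPhasePoly T μ (k + 1) P := by
  induction k generalizing P with
  | zero =>
    intro g
    filter_upwards [(hT g).ae_eq hP, hP] with x h1 h2
    simp only [Function.comp_apply] at h1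
    simp [h1, h2]
  | succ k ih => exact fun g => ih (hP g)

theorem mono {k' : ℕ} (hk : k ≤ k') (hP : AddPhasePoly T μ k P) : AddPhasePoly T μ k' P := by
  induction hk with
  | refl => exact hP
  | step _ ih => exact succ hT ih

variable (hcomm : ∀ g h, Function.Commute (T g) (T h))
include hcomm

theorem comp (hP : AddPhasePoly T μ k P) (g : ι) : AddPhasePoly T μ k (P ∘ T g) := by
  induction k generalizing P with
  | zero => exact (hT g).ae_eq hP
  | succ k ih =>
    rw [succ_iff]
    intro h
    rw [show (P ∘ T g) ∘ T h - P ∘ T g = (P ∘ T h - P) ∘ T g by ext x; simp [hcomm g h x]]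
    exact ih (hP h)

protected theorem mul {R : Type*} [CommRing R] {k₁ k₂ : ℕ} {P Q : X → R}
    (hP : AddPhasePoly T μ k₁ P) (hQ : AddPhasePoly T μ k₂ Q) :
    AddPhasePoly T μ (k₁ + k₂) (P * Q) := by
  induction k₁ generalizing P Q k₂ with
  | zero =>
    refine mono hT (Nat.zero_le _) (?_ : AddPhasePoly T μ 0 _)
    filter_upwards [hP] with x hx
    simp [hx]
  | succ k₁ ih₁ =>
    induction k₂ generalizing Q with
    | zero =>
      refine mono hT (Nat.zero_le _) (?_ : AddPhasePoly T μ 0 _)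
      filter_upwards [hQ] with x hx
      simp [hx]
    | succ k₂ ih₂ =>
      rw [show k₁ + 1 + (k₂ + 1) = k₁ + (k₂ + 1) + 1 by omega, succ_iff]
      intro g
      rw [show (P * Q) ∘ T g - P * Q = (P ∘ T g - P) * (Q ∘ T g) + P * (Q ∘ T g - Q) by
        ext; simp; ring]
      refine .add (ih₁ (succ_iff.mp hP g) (comp hT hcomm hQ g)) ?_
      rw [show k₁ + (k₂ + 1) = k₁ + 1 + k₂ by omega]
      exact ih₂ (succ_iff.mp hQ g)

theorem comp_of_addPoly {B : Type*} [Fintype A] [CommRing B] {d D : ℕ}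
    (hD : ∀ (f : A → B) (Q : X → A), AddPhasePoly T μ d Q → AddPhasePoly T μ D (f ∘ Q))
    {e : ℕ} {f : A → B} (hf : AddPoly e f) {P : X → A} (hP : AddPhasePoly T μ (d + 1) P) :
    AddPhasePoly T μ (e * (D + 1)) (f ∘ P) := by
  classical
  induction e generalizing f with
  | zero =>
    rw [show f = 0 from hf, zero_mul]
    exact AddPhasePoly.zero 0
  | succ e ih =>
    rw [show (e + 1) * (D + 1) = D + e * (D + 1) + 1 by ring, succ_iff]
    intro g
    have hdecomp : (f ∘ P) ∘ T g - f ∘ P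
        = ∑ a, (Pi.single a 1 ∘ (P ∘ T g - P)) * (Δ_[a] f ∘ P) := by
      ext x
      simp [Finset.sum_apply, Pi.single_apply, fwdDiff]
    rw [hdecomp]
    exact Finset.sum_induction _ _ (fun _ _ => .add) (.zero _) fun a _ =>
      .mul hT hcomm (hD _ _ (succ_iff.mp hP g)) (ih (hf a))

theorem comp_of_forall_addPoly {B : Type*} [Fintype A] [CommRing B] {s : ℕ}
    (hs : ∀ f : A → B, AddPoly s f) :
    ∀ {d : ℕ} (f : A → B) {P : X → A}, AddPhasePoly T μ d P →
      AddPhasePoly T μ (compDegree s d) (f ∘ P)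
  | 0, f, P, hP => fun g => by
    filter_upwards [(hT g).ae_eq hP, hP] with x h1 h2
    simp only [Function.comp_apply] at h1
    simp [h1, h2]
  | _ + 1, f, _, hP =>
    comp_of_addPoly hT hcomm (fun f _ hQ => comp_of_forall_addPoly hs f hQ) (hs f) hP

end

end AddPhasePoly

theorem ZMod.val_castHom_div_pow_mod {p j m : ℕ} [NeZero p] (hjm : j < m) (a : ZMod (p ^ m)) :
    (ZMod.castHom (pow_dvd_pow p hjm) (ZMod (p ^ (j + 1))) a).val / p ^ j % p
      = a.val / p ^ j % p := by
  rw [ZMod.castHom_apply, ← ZMod.natCast_val, ZMod.val_natCast, pow_succ,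
    Nat.mod_mul_right_div_self, Nat.mod_mod_of_dvd _ (dvd_refl p)]

theorem digit_of_additive_phase_polynomial_is_phase_polynomial_general
    (p l d j : ℕ) (hp : p.Prime) :
    ∃ C : ℕ,
      ∀ (m : ℕ), 1 ≤ m → j ≤ m - 1 →
      ∀ (G : Type) [AddCommGroup G] [Countable G]
        (X : Type) [MeasurableSpace X] (μ : Measure X) [IsProbabilityMeasure μ]
        (T : G → X → X),
        (∀ g, MeasurePreserving (T g) μ μ) → T 0 = id →
        (∀ g g', T (g + g') = T g ∘ T g') → IsErgodicAction T μ →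
      ∀ (P : X → ZMod (p ^ m)),
        (∀ a : ZMod (p ^ m), MeasurableSet (P ⁻¹' {a})) →
        AddPhasePoly T μ d P →
        AddPhasePoly T μ C
          (fun x => ((((P x).val / p ^ j) % p : ℕ) : ZMod (p ^ l))) := by
  refine ⟨compDegree (p ^ (j + 1) * l) d, fun m hm hjm G _ _ X _ μ _ T hT _ hadd _ P _ hP => ?_⟩
  have hcomm : ∀ g h, Function.Commute (T g) (T h) := fun g h x => by
    rw [← Function.comp_apply (f := T g), ← hadd, add_comm, hadd, Function.comp_apply]
  have hjm_lt : j < m := by omega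
  have : NeZero p := ⟨hp.ne_zero⟩
  let digit : ZMod (p ^ (j + 1)) → ZMod (p ^ l) := fun a => (a.val / p ^ j % p : ℕ)
  let π := ZMod.castHom (pow_dvd_pow p hjm_lt) (ZMod (p ^ (j + 1)))
  have hdigit : (fun x => ((((P x).val / p ^ j) % p : ℕ) : ZMod (p ^ l))) = digit ∘ π ∘ P := by
    ext x
    exact congrArg _ (ZMod.val_castHom_div_pow_mod hjm_lt (P x)).symm
  rw [hdigit]
  exact (hP.map π.toAddMonoidHom).comp_of_forall_addPoly (fun g => (hT g).quasiMeasurePreserving)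
    hcomm (addPoly_zmod_prime_pow hp (j + 1) l) digit

/-- For every prime `p` and integers `l, d ≥ 1` and `j`, there exists a
constant `C = C(l, d, p, j)` such that for every `m ≥ 1` with `j ≤ m - 1`, every ergodic
`G`-system `X` (with `G` countable discrete abelian), and every additive phase polynomial
`P : X → ℤ/p^mℤ` of degree `< d`, the `j`-th base-`p` digit `x ↦ b_j (P x)`, viewed as a
map into `ℤ/p^lℤ`, is an additive phase polynomial of degree `< C`. -/
theorem digit_of_additive_phase_polynomial_is_phase_polynomial
    (p l d j : ℕ) (hp : p.Prime) (hl : 1 ≤ l) (hd : 1 ≤ d) :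
    ∃ C : ℕ,
      ∀ (m : ℕ), 1 ≤ m → j ≤ m - 1 →
      ∀ (G : Type) [AddCommGroup G] [Countable G]
        (X : Type) [MeasurableSpace X] (μ : Measure X) [IsProbabilityMeasure μ]
        (T : G → X → X),
        (∀ g, MeasurePreserving (T g) μ μ) → T 0 = id →
        (∀ g g', T (g + g') = T g ∘ T g') → IsErgodicAction T μ →
      ∀ (P : X → ZMod (p ^ m)),
        (∀ a : ZMod (p ^ m), MeasurableSet (P ⁻¹' {a})) →
        AddPhasePoly T μ d P →
        AddPhasePoly T μ C
          (fun x => ((((P x).val / p ^ j) % p : ℕ) : ZMod (p ^ l))) :=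
  digit_of_additive_phase_polynomial_is_phase_polynomial_general p l d j hp
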